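/- Let $N = 6$ and fix $\gamma \in \mathbb{R}$. Suppose $y_1, y_2 : (0,\infty) \to \mathbb{R}$ are two bounded $C^2$ solutions of $y'' + t^{-5/2}(y + y|y|) = 0$ on $(0,\infty)$ with $y_i(t) \to \gamma$ as $t \to +\infty$ for $i = 1,2$. Then $y_1 = y_2$. -/

import Mathlib

open Real Set Filter Topology

/-! The difference `a = y₁ - y₂` satisfies `|a''(t)| ≤ L t^(-5/2) |a(t)|` and `a → 0`.
If `|a| ≤ M` on `[T, ∞)`, comparing with power functions twice gives
`|a'(t)| ≤ (2/3) L M t^(-3/2)` and then `|a(t)| ≤ (4/3) L M t^(-1/2) ≤ M / 2` once `T` is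
large, so `a` vanishes near infinity. Going backwards, on `[t₀, T₀]` we have
`|a''| ≤ c |a|` with `c = L t₀^(-5/2)`, so the energy `(a² + a'²) e^((1 + c) t)` is
nondecreasing; it vanishes at `T₀`, hence at `t₀`. -/

lemma monotoneOn_of_hasDerivAt_nonneg {D : Set ℝ} (hD : Convex ℝ D) {f f' : ℝ → ℝ}
    (hf : ∀ x ∈ D, HasDerivAt f (f' x) x) (hf'₀ : ∀ x ∈ D, 0 ≤ f' x) : MonotoneOn f D :=
  monotoneOn_of_hasDerivWithinAt_nonneg hD (fun x hx => (hf x hx).continuousAt.continuousWithinAt)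
    (fun x hx => (hf x (interior_subset hx)).hasDerivWithinAt)
    fun x hx => hf'₀ x (interior_subset hx)

section PowerComparison

variable {f f' f'' : ℝ → ℝ} {t B q : ℝ}

lemma abs_sub_le_of_abs_deriv_le {G G' : ℝ → ℝ} (hf : ∀ s ∈ Ici t, HasDerivAt f (f' s) s)
    (hG : ∀ s ∈ Ici t, HasDerivAt G (G' s) s) (hbound : ∀ s ∈ Ici t, |f' s| ≤ -G' s)
    {s : ℝ} (hs : t ≤ s) : |f s - f t| ≤ G t - G s := by
  have hup : MonotoneOn (fun r => -f r - G r) (Ici t) :=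
    monotoneOn_of_hasDerivAt_nonneg (convex_Ici t) (fun r hr => (hf r hr).neg.sub (hG r hr))
      fun r hr => by linarith [le_abs_self (f' r), hbound r hr]
  have hdown : MonotoneOn (fun r => f r - G r) (Ici t) :=
    monotoneOn_of_hasDerivAt_nonneg (convex_Ici t) (fun r hr => (hf r hr).sub (hG r hr))
      fun r hr => by linarith [neg_abs_le (f' r), hbound r hr]
  have h₁ := hup self_mem_Ici hs hs
  have h₂ := hdown self_mem_Ici hs hs
  simp only at h₁ h₂
  exact abs_sub_le_iff.mpr ⟨by linarith, by linarith⟩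

lemma abs_sub_le_of_abs_deriv_le_rpow (ht : 0 < t) (hq : 0 < q)
    (hf : ∀ s ∈ Ici t, HasDerivAt f (f' s) s) (hbound : ∀ s ∈ Ici t, |f' s| ≤ B * s ^ (-(q + 1)))
    {s : ℝ} (hs : t ≤ s) : |f s - f t| ≤ B / q * t ^ (-q) - B / q * s ^ (-q) := by
  refine abs_sub_le_of_abs_deriv_le (G := fun r => B / q * r ^ (-q))
    (G' := fun r => B / q * (-q * r ^ (-q - 1))) hf (fun r hr => ?_) (fun r hr => ?_) hs
  · exact ((hasDerivAt_rpow_const (Or.inl (ht.trans_le hr).ne')).const_mul (B / q))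
  · rw [show -q - 1 = -(q + 1) by ring]
    field_simp
    exact hbound r hr

lemma abs_le_rpow_of_abs_deriv_le_rpow (ht : 0 < t) (hq : 0 < q) (hB : 0 ≤ B)
    (hf : ∀ s ∈ Ici t, HasDerivAt f (f' s) s) (hbound : ∀ s ∈ Ici t, |f' s| ≤ B * s ^ (-(q + 1)))
    (hlim : Tendsto f atTop (𝓝 0)) : |f t| ≤ B / q * t ^ (-q) := by
  have hconv : Tendsto (fun s => |f s - f t|) atTop (𝓝 |f t|) := by
    simpa using (hlim.sub_const (f t)).abs
  refine le_of_tendsto hconv ?_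
  filter_upwards [eventually_ge_atTop t] with s hs
  have hpos : 0 ≤ B / q * s ^ (-q) := by
    have := rpow_nonneg (ht.trans_le hs).le (-q)
    positivity
  linarith [abs_sub_le_of_abs_deriv_le_rpow ht hq hf hbound hs]

lemma deriv_le_of_tendsto {c ε : ℝ} (hf : ∀ s ∈ Ici t, HasDerivAt f (f' s) s)
    (hlim : Tendsto f atTop (𝓝 c)) (hclose : ∀ s ∈ Ici t, f' t - ε ≤ f' s) : f' t ≤ ε := by
  by_contra! hε
  set δ := f' t - ε
  have hδ : 0 < δ := by linarith
  have hmono : MonotoneOn (fun s => f s - δ * s) (Ici t) :=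
    monotoneOn_of_hasDerivAt_nonneg (convex_Ici t)
      (fun s hs => (hf s hs).sub ((hasDerivAt_id s).const_mul δ))
      fun s hs => by linarith [hclose s hs]
  have hgrow : Tendsto f atTop atTop := by
    refine tendsto_atTop_mono' atTop ?_
      (tendsto_atTop_add_const_left atTop (f t - δ * t) (tendsto_id.const_mul_atTop hδ))
    filter_upwards [eventually_ge_atTop t] with s hs
    have := hmono self_mem_Ici hs hs
    simp only at this
    simp only [id_eq]
    linarith
  exact not_tendsto_nhds_of_tendsto_atTop hgrow c hlim

lemma abs_deriv_le_of_tendsto {c ε : ℝ} (hf : ∀ s ∈ Ici t, HasDerivAt f (f' s) s)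
    (hlim : Tendsto f atTop (𝓝 c)) (hclose : ∀ s ∈ Ici t, |f' s - f' t| ≤ ε) : |f' t| ≤ ε := by
  refine abs_le.mpr ⟨?_, deriv_le_of_tendsto hf hlim fun s hs => ?_⟩
  · have := deriv_le_of_tendsto (f := -f) (f' := -f') (ε := ε) (fun s hs => (hf s hs).neg)
      hlim.neg
      fun s hs => by simp only [Pi.neg_apply]; linarith [(abs_le.mp (hclose s hs)).2]
    simp only [Pi.neg_apply] at this
    linarith
  · linarith [(abs_le.mp (hclose s hs)).1]

lemma abs_deriv_le_rpow_of_abs_deriv2_le_rpow {c : ℝ} (ht : 0 < t) (hq : 0 < q) (hB : 0 ≤ B)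
    (hf : ∀ s ∈ Ici t, HasDerivAt f (f' s) s) (hf' : ∀ s ∈ Ici t, HasDerivAt f' (f'' s) s)
    (hbound : ∀ s ∈ Ici t, |f'' s| ≤ B * s ^ (-(q + 1))) (hlim : Tendsto f atTop (𝓝 c)) :
    |f' t| ≤ B / q * t ^ (-q) := by
  refine abs_deriv_le_of_tendsto hf hlim fun s hs => ?_
  have hpos : 0 ≤ B / q * s ^ (-q) := by
    have := rpow_nonneg (ht.trans_le hs).le (-q)
    positivity
  linarith [abs_sub_le_of_abs_deriv_le_rpow ht hq hf' hbound hs]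

lemma abs_le_rpow_of_abs_deriv2_le_rpow {p : ℝ} (ht : 0 < t) (hp : 2 < p) (hB : 0 ≤ B)
    (hf : ∀ s ∈ Ici t, HasDerivAt f (f' s) s) (hf' : ∀ s ∈ Ici t, HasDerivAt f' (f'' s) s)
    (hbound : ∀ s ∈ Ici t, |f'' s| ≤ B * s ^ (-p)) (hlim : Tendsto f atTop (𝓝 0)) :
    |f t| ≤ B / ((p - 1) * (p - 2)) * t ^ (-(p - 2)) := by
  have hf'bound : ∀ s ∈ Ici t, |f' s| ≤ B / (p - 1) * s ^ (-((p - 2) + 1)) := by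
    intro s hs
    have hsub : Ici s ⊆ Ici t := Ici_subset_Ici.mpr hs
    rw [show -((p - 2) + 1) = -(p - 1) by ring]
    refine abs_deriv_le_rpow_of_abs_deriv2_le_rpow (ht.trans_le hs) (by linarith) hB
      (fun r hr => hf r (hsub hr)) (fun r hr => hf' r (hsub hr)) (fun r hr => ?_) hlim
    rw [show -((p - 1) + 1) = -p by ring]
    exact hbound r (hsub hr)
  rw [← div_div]
  exact abs_le_rpow_of_abs_deriv_le_rpow ht (by linarith)
    (div_nonneg hB (by linarith)) hf hf'bound hlim

end PowerComparison

section SecondOrderInequality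

variable {a a' a'' : ℝ → ℝ} {L p : ℝ}

lemma eventually_eq_zero_of_abs_deriv2_le (hp : 2 < p) (hL : 0 ≤ L)
    (ha : ∀ t ∈ Ioi 0, HasDerivAt a (a' t) t) (ha' : ∀ t ∈ Ioi 0, HasDerivAt a' (a'' t) t)
    (hbound : ∀ t ∈ Ioi 0, |a'' t| ≤ L * t ^ (-p) * |a t|) (hlim : Tendsto a atTop (𝓝 0)) :
    ∀ᶠ t in atTop, a t = 0 := by
  set K := L / ((p - 1) * (p - 2))
  have hsmall : ∀ᶠ t in atTop, K * t ^ (-(p - 2)) < 1 / 2 := by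
    have hdecay : Tendsto (fun t => K * t ^ (-(p - 2))) atTop (𝓝 0) := by
      rw [← mul_zero K]
      exact (tendsto_rpow_neg_atTop (by linarith)).const_mul K
    exact hdecay.eventually_lt_const (by norm_num)
  have hbdd : ∀ᶠ t in atTop, |a t| < 1 := by
    have habs : Tendsto (fun t => |a t|) atTop (𝓝 0) := by simpa using hlim.abs
    exact habs.eventually_lt_const one_pos
  obtain ⟨T, hT⟩ := eventually_atTop.mp ((eventually_gt_atTop 0).and (hbdd.and hsmall))
  set M := sSup ((fun t => |a t|) '' Ici T)
  have hM : BddAbove ((fun t => |a t|) '' Ici T) := by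
    refine ⟨1, ?_⟩
    rintro _ ⟨t, ht, rfl⟩
    exact (hT t ht).2.1.le
  have hle : ∀ t ∈ Ici T, |a t| ≤ M := fun t ht => le_csSup hM ⟨t, ht, rfl⟩
  have hM₀ : 0 ≤ M := (abs_nonneg _).trans (hle T self_mem_Ici)
  have hhalf : ∀ t ∈ Ici T, |a t| ≤ M / 2 := by
    intro t ht
    obtain ⟨ht₀, -, hKt⟩ := hT t ht
    have hsub : Ici t ⊆ Ioi 0 := fun s hs => ht₀.trans_le hs
    have hdecay := abs_le_rpow_of_abs_deriv2_le_rpow (B := L * M) ht₀ hp (by positivity)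
      (fun s hs => ha s (hsub hs)) (fun s hs => ha' s (hsub hs)) (fun s hs => ?_) hlim
    · calc |a t| ≤ L * M / ((p - 1) * (p - 2)) * t ^ (-(p - 2)) := hdecay
        _ = K * t ^ (-(p - 2)) * M := by ring
        _ ≤ 1 / 2 * M := by gcongr
        _ = M / 2 := by ring
    · have := rpow_nonneg (hsub hs).le (-p)
      calc |a'' s| ≤ L * s ^ (-p) * |a s| := hbound s (hsub hs)
        _ ≤ L * s ^ (-p) * M := by gcongr; exact hle s (mem_Ici.mpr (le_trans ht hs))
        _ = L * M * s ^ (-p) := by ring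
  have hM0 : M ≤ 0 := by
    have : M ≤ M / 2 :=
      csSup_le ⟨_, T, self_mem_Ici, rfl⟩ (by rintro _ ⟨t, ht, rfl⟩; exact hhalf t ht)
    linarith
  filter_upwards [eventually_ge_atTop T] with t ht
  exact abs_nonpos_iff.mp ((hle t ht).trans hM0)

lemma eq_zero_of_abs_deriv2_le_of_eq_zero {c t₀ T₀ : ℝ} (hc : 0 ≤ c) (hle : t₀ ≤ T₀)
    (ha : ∀ s ∈ Icc t₀ T₀, HasDerivAt a (a' s) s) (ha' : ∀ s ∈ Icc t₀ T₀, HasDerivAt a' (a'' s) s)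
    (hbound : ∀ s ∈ Icc t₀ T₀, |a'' s| ≤ c * |a s|) (h₀ : a T₀ = 0) (h₀' : a' T₀ = 0) :
    a t₀ = 0 := by
  set E := fun s => (a s ^ 2 + a' s ^ 2) * exp ((1 + c) * s)
  have hE : MonotoneOn E (Icc t₀ T₀) := by
    refine monotoneOn_of_hasDerivAt_nonneg (convex_Icc t₀ T₀)
      (f' := fun s => (2 * a s * a' s + 2 * a' s * a'' s + (1 + c) * (a s ^ 2 + a' s ^ 2))
        * exp ((1 + c) * s)) (fun s hs => ?_) fun s hs => ?_
    · refine ((((ha s hs).pow 2).add ((ha' s hs).pow 2)).mul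
        ((hasDerivAt_id s).const_mul (1 + c)).exp).congr_deriv ?_
      simp only [Pi.add_apply, Pi.pow_apply, id]
      norm_num
      ring
    · -- `(a + a')² ≥ 0` absorbs `2 a a'`, and `c (|a| - |a'|)² ≥ 0` absorbs `2 a' a''`
      have h₁ : -(|a' s| * |a'' s|) ≤ a' s * a'' s := by
        rw [← abs_mul]; exact neg_abs_le _
      have h₂ : |a' s| * |a'' s| ≤ |a' s| * (c * |a s|) :=
        mul_le_mul_of_nonneg_left (hbound s hs) (abs_nonneg _)
      have h₃ : 0 ≤ c * (|a s| - |a' s|) ^ 2 := by positivity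
      have h₄ : 0 ≤ 2 * a s * a' s + 2 * a' s * a'' s + (1 + c) * (a s ^ 2 + a' s ^ 2) := by
        nlinarith [sq_nonneg (a s + a' s), sq_abs (a s), sq_abs (a' s)]
      positivity
  have hEt₀ : (a t₀ ^ 2 + a' t₀ ^ 2) * exp ((1 + c) * t₀) ≤ 0 := by
    simpa [E, h₀, h₀'] using hE ⟨le_rfl, hle⟩ ⟨hle, le_rfl⟩ hle
  have hsq : a t₀ ^ 2 + a' t₀ ^ 2 ≤ 0 := nonpos_of_mul_nonpos_left hEt₀ (exp_pos _)
  nlinarith [sq_nonneg (a t₀), sq_nonneg (a' t₀)]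

lemma eqOn_zero_of_abs_deriv2_le (hp : 2 < p) (hL : 0 ≤ L)
    (ha : ∀ t ∈ Ioi 0, HasDerivAt a (a' t) t) (ha' : ∀ t ∈ Ioi 0, HasDerivAt a' (a'' t) t)
    (hbound : ∀ t ∈ Ioi 0, |a'' t| ≤ L * t ^ (-p) * |a t|) (hlim : Tendsto a atTop (𝓝 0)) :
    EqOn a 0 (Ioi 0) := by
  intro t₀ ht₀
  obtain ⟨T, hT⟩ :=
    eventually_atTop.mp (eventually_eq_zero_of_abs_deriv2_le hp hL ha ha' hbound hlim)
  set T₀ := max T t₀ + 1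
  have hTT₀ : T < T₀ := by linarith [le_max_left T t₀]
  have ht₀T₀ : t₀ ≤ T₀ := by linarith [le_max_right T t₀]
  have hsub : Icc t₀ T₀ ⊆ Ioi 0 := fun s hs => lt_of_lt_of_le ht₀ hs.1
  have hvanish : a =ᶠ[𝓝 T₀] fun _ => 0 := by
    filter_upwards [Ioi_mem_nhds hTT₀] with s hs using hT s hs.le
  have h₀' : a' T₀ = 0 :=
    (ha T₀ (hsub ⟨ht₀T₀, le_rfl⟩)).unique ((hasDerivAt_const T₀ 0).congr_of_eventuallyEq hvanish)
  refine eq_zero_of_abs_deriv2_le_of_eq_zero (c := L * t₀ ^ (-p))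
    (mul_nonneg hL (rpow_nonneg ht₀.le _)) ht₀T₀
    (fun s hs => ha s (hsub hs)) (fun s hs => ha' s (hsub hs)) (fun s hs => ?_)
    (hT T₀ hTT₀.le) h₀'
  calc |a'' s| ≤ L * s ^ (-p) * |a s| := hbound s (hsub hs)
    _ ≤ L * t₀ ^ (-p) * |a s| := by
      have := rpow_le_rpow_of_nonpos ht₀ hs.1 (by linarith : -p ≤ 0)
      gcongr

end SecondOrderInequality

lemma ContDiffOn.hasDerivAt_deriv {y : ℝ → ℝ} {s : Set ℝ} {n : WithTop ℕ∞}
    (hy : ContDiffOn ℝ n y s) (hn : n ≠ 0) (hs : IsOpen s) {t : ℝ} (ht : t ∈ s) :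
    HasDerivAt y (deriv y t) t :=
  ((hy.differentiableOn hn t ht).differentiableAt (hs.mem_nhds ht)).hasDerivAt

lemma abs_add_mul_abs_sub_le (u v : ℝ) :
    |(u + u * |u|) - (v + v * |v|)| ≤ (1 + |u| + |v|) * |u - v| := by
  have hsplit : (u + u * |u|) - (v + v * |v|) = (u - v) * (1 + |u|) + v * (|u| - |v|) := by ring
  have hv : |v| * |(|u| - |v|)| ≤ |v| * |u - v| :=
    mul_le_mul_of_nonneg_left (abs_abs_sub_abs_le_abs_sub u v) (abs_nonneg v)
  calc |(u + u * |u|) - (v + v * |v|)|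
      ≤ |(u - v) * (1 + |u|)| + |v * (|u| - |v|)| := hsplit ▸ abs_add_le _ _
    _ = |u - v| * (1 + |u|) + |v| * |(|u| - |v|)| := by
        rw [abs_mul, abs_mul, abs_of_nonneg (by positivity : (0 : ℝ) ≤ 1 + |u|)]
    _ ≤ (1 + |u| + |v|) * |u - v| := by nlinarith

lemma abs_sub_le_of_emdenFowler {u v u'' v'' w Cu Cv : ℝ} (hw : 0 ≤ w)
    (hu : u'' + w * (u + u * |u|) = 0) (hv : v'' + w * (v + v * |v|) = 0)
    (hCu : |u| ≤ Cu) (hCv : |v| ≤ Cv) : |u'' - v''| ≤ (1 + Cu + Cv) * w * |u - v| := by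
  have hdiff : u'' - v'' = -(w * ((u + u * |u|) - (v + v * |v|))) := by linear_combination hu - hv
  rw [hdiff, abs_neg, abs_mul, abs_of_nonneg hw]
  calc w * |(u + u * |u|) - (v + v * |v|)| ≤ w * ((1 + |u| + |v|) * |u - v|) := by
        gcongr; exact abs_add_mul_abs_sub_le u v
    _ ≤ w * ((1 + Cu + Cv) * |u - v|) := by gcongr
    _ = (1 + Cu + Cv) * w * |u - v| := by ring

theorem stmt10 (γ : ℝ) (y₁ y₂ : ℝ → ℝ)
    (h₁ : ContDiffOn ℝ 2 y₁ (Set.Ioi 0)) (h₂ : ContDiffOn ℝ 2 y₂ (Set.Ioi 0))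
    (hb₁ : ∃ C : ℝ, ∀ t ∈ Set.Ioi (0 : ℝ), |y₁ t| ≤ C)
    (hb₂ : ∃ C : ℝ, ∀ t ∈ Set.Ioi (0 : ℝ), |y₂ t| ≤ C)
    (hode₁ : ∀ t ∈ Set.Ioi (0 : ℝ),
      deriv (deriv y₁) t + t ^ (-(5 / 2 : ℝ)) * (y₁ t + y₁ t * |y₁ t|) = 0)
    (hode₂ : ∀ t ∈ Set.Ioi (0 : ℝ),
      deriv (deriv y₂) t + t ^ (-(5 / 2 : ℝ)) * (y₂ t + y₂ t * |y₂ t|) = 0)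
    (hlim₁ : Tendsto y₁ atTop (nhds γ)) (hlim₂ : Tendsto y₂ atTop (nhds γ)) :
    Set.EqOn y₁ y₂ (Set.Ioi 0) := by
  obtain ⟨C₁, hC₁⟩ := hb₁
  obtain ⟨C₂, hC₂⟩ := hb₂
  have hL : 0 ≤ 1 + C₁ + C₂ := by
    linarith [(abs_nonneg _).trans (hC₁ 1 (mem_Ioi.mpr one_pos)),
      (abs_nonneg _).trans (hC₂ 1 (mem_Ioi.mpr one_pos))]
  have hd₁ := h₁.deriv_of_isOpen isOpen_Ioi (m := 1) (by norm_num)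
  have hd₂ := h₂.deriv_of_isOpen isOpen_Ioi (m := 1) (by norm_num)
  have hzero := eqOn_zero_of_abs_deriv2_le (a := fun t => y₁ t - y₂ t) (p := 5 / 2)
    (by norm_num) hL
    (fun t ht => (h₁.hasDerivAt_deriv (by norm_num) isOpen_Ioi ht).sub
      (h₂.hasDerivAt_deriv (by norm_num) isOpen_Ioi ht))
    (fun t ht => (hd₁.hasDerivAt_deriv one_ne_zero isOpen_Ioi ht).sub
      (hd₂.hasDerivAt_deriv one_ne_zero isOpen_Ioi ht))
    (fun t ht => abs_sub_le_of_emdenFowler (rpow_nonneg (le_of_lt ht) _) (hode₁ t ht)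
      (hode₂ t ht) (hC₁ t ht) (hC₂ t ht))
    (by simpa using hlim₁.sub hlim₂)
  exact fun t ht => sub_eq_zero.mp (hzero ht)
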